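/- Let 1 < p and define V_p(z) := |z|^{(p−2)/2} z for z ∈ ℝⁿ. For a C¹ vector field A₀ : ℝⁿ\{0} → ℝⁿ satisfying ν(|z|^{p−2} + a₀|z|^{q−2})|ξ|² ≤ ⟨∂A₀(z)ξ, ξ⟩ for all z ≠ 0, ξ ∈ ℝⁿ, with a₀ ≥ 0, 1 < p ≤ q and ν > 0, there exists a constant c = c(n, ν, p, q) such that |V_p(z₁) − V_p(z₂)|² + a₀ |V_q(z₁) − V_q(z₂)|² ≤ c ⟨A₀(z₁) − A₀(z₂), z₁ − z₂⟩ for all z₁, z₂ ∈ ℝⁿ. -/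

import Mathlib

/-!
Assume `‖z₂‖ ≤ ‖z₁‖`. Writing `V_t(z₁) - V_t(z₂) = |z₁|^γ (z₁ - z₂) + (|z₁|^γ - |z₂|^γ) z₂` with
`γ = (t - 2)/2 ≥ -1` and applying the mean value theorem to `s ↦ s^γ` when `|z₂| ≥ |z₁|/2`, one gets
`|V_t(z₁) - V_t(z₂)|² ≲ |z|^{t-2} |z₁ - z₂|²` for every `z` with `|z₁|/2 ≤ |z| ≤ |z₁|`.
On the other side, `s ↦ ⟨A₀(z₂ + s(z₁ - z₂)), z₁ - z₂⟩` has nonnegative derivative wherever the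
segment avoids the origin, hence is nondecreasing on `[0, 1]`; on `[3/4, 1]` the segment stays in
the annulus `|z₁|/2 ≤ |z| ≤ |z₁|`, where ellipticity bounds the derivative from below by
`ν (|z|^{p-2} + a₀ |z|^{q-2}) |z₁ - z₂|²`. Comparing the two bounds at the same `z` gives the claim.
-/

open scoped RealInnerProductSpace

lemma rpow_le_two_rpow_abs_mul_rpow {x y : ℝ} (e : ℝ) (hy : 0 < y) (hxy : x ≤ 2 * y)
    (hyx : y ≤ 2 * x) : x ^ e ≤ 2 ^ |e| * y ^ e := by
  have hx : 0 < x := by linarith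
  have hratio : (x / y) ^ e ≤ 2 ^ |e| := by
    rcases le_total 0 e with he | he
    · rw [abs_of_nonneg he]
      exact Real.rpow_le_rpow (by positivity) ((div_le_iff₀ hy).2 hxy) he
    · rw [abs_of_nonpos he, Real.rpow_neg zero_le_two, ← Real.inv_rpow zero_le_two]
      refine Real.rpow_le_rpow_of_nonpos (by positivity) ?_ he
      rw [le_div_iff₀ hy]
      linarith
  calc x ^ e = (x / y) ^ e * y ^ e := by
        rw [Real.div_rpow hx.le hy.le, div_mul_cancel₀ _ (Real.rpow_pos_of_pos hy e).ne']
    _ ≤ 2 ^ |e| * y ^ e := by gcongr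

lemma abs_rpow_sub_rpow_le_of_half_le (γ : ℝ) {x y : ℝ} (hxy : x ≤ 2 * y) (hyx : y ≤ x)
    (hy : 0 < y) :
    |x ^ γ - y ^ γ| ≤ |γ| * 2 ^ |γ - 1| * x ^ (γ - 1) * (x - y) := by
  have hderiv : ∀ s ∈ Set.Icc y x, HasDerivWithinAt (fun s : ℝ => s ^ γ)
      (γ * s ^ (γ - 1)) (Set.Icc y x) s := fun s hs =>
    (Real.hasDerivAt_rpow_const (Or.inl (hy.trans_le hs.1).ne')).hasDerivWithinAt
  have hbound : ∀ s ∈ Set.Icc y x, ‖γ * s ^ (γ - 1)‖ ≤ |γ| * 2 ^ |γ - 1| * x ^ (γ - 1) := by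
    intro s ⟨hys, hsx⟩
    have hs : 0 < s := hy.trans_le hys
    rw [Real.norm_eq_abs, abs_mul, abs_of_nonneg (Real.rpow_nonneg hs.le _), mul_assoc]
    gcongr
    exact rpow_le_two_rpow_abs_mul_rpow _ (hs.trans_le hsx) (by linarith) (by linarith)
  simpa [Real.norm_eq_abs, abs_of_nonneg (sub_nonneg.2 hyx)] using
    (convex_Icc y x).norm_image_sub_le_of_norm_hasDerivWithin_le hderiv hbound
      (Set.left_mem_Icc.2 hyx) (Set.right_mem_Icc.2 hyx)

lemma abs_rpow_sub_rpow_mul_le {γ : ℝ} (hγ : -1 ≤ γ) :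
    ∃ C, 0 ≤ C ∧ ∀ x y : ℝ, 0 ≤ y → y ≤ x → |x ^ γ - y ^ γ| * y ≤ C * x ^ γ * (x - y) := by
  refine ⟨4 + |γ| * 2 ^ |γ - 1|, by positivity, fun x y hy hyx => ?_⟩
  rcases hy.eq_or_lt with rfl | hy
  · simp only [mul_zero]; exact mul_nonneg (by positivity) (sub_nonneg.2 hyx)
  have hx : 0 < x := hy.trans_le hyx
  have hxγ : 0 ≤ x ^ γ := Real.rpow_nonneg hx.le γ
  rcases le_or_gt x (2 * y) with hnear | hfar
  · calc |x ^ γ - y ^ γ| * y ≤ (|γ| * 2 ^ |γ - 1| * x ^ (γ - 1) * (x - y)) * x := by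
          gcongr
          exact abs_rpow_sub_rpow_le_of_half_le γ hnear hyx hy
      _ = |γ| * 2 ^ |γ - 1| * x ^ γ * (x - y) := by
          rw [Real.rpow_sub_one hx.ne']; field_simp
      _ ≤ (4 + |γ| * 2 ^ |γ - 1|) * x ^ γ * (x - y) := by
          gcongr; exact le_add_of_nonneg_left (by norm_num)
  · have hyγ : y ^ γ * y ≤ x ^ γ * x := by
      rw [← Real.rpow_add_one hy.ne', ← Real.rpow_add_one hx.ne']
      exact Real.rpow_le_rpow hy.le hyx (by linarith)
    calc |x ^ γ - y ^ γ| * y ≤ (x ^ γ + y ^ γ) * y := by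
          gcongr
          exact (abs_sub _ _).trans_eq (by
            rw [abs_of_nonneg hxγ, abs_of_nonneg (Real.rpow_nonneg hy.le γ)])
      _ ≤ 4 * x ^ γ * (x - y) := by nlinarith
      _ ≤ (4 + |γ| * 2 ^ |γ - 1|) * x ^ γ * (x - y) := by
          gcongr; exact le_add_of_nonneg_right (by positivity)

lemma norm_add_smul_sub_bounds {E : Type*} [SeminormedAddCommGroup E] [NormedSpace ℝ E] {z₁ z₂ : E}
    (hz : ‖z₂‖ ≤ ‖z₁‖) {t : ℝ} (ht : 3 / 4 ≤ t) (ht₁ : t ≤ 1) :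
    ‖z₁‖ ≤ 2 * ‖z₂ + t • (z₁ - z₂)‖ ∧ ‖z₂ + t • (z₁ - z₂)‖ ≤ ‖z₁‖ := by
  have hrep : z₂ + t • (z₁ - z₂) = t • z₁ + (1 - t) • z₂ := by module
  have h₁ : ‖t • z₁‖ = t * ‖z₁‖ := by rw [norm_smul, Real.norm_of_nonneg (by linarith)]
  have h₂ : ‖(1 - t) • z₂‖ = (1 - t) * ‖z₂‖ := by rw [norm_smul, Real.norm_of_nonneg (by linarith)]
  have hz₂ : (1 - t) * ‖z₂‖ ≤ (1 - t) * ‖z₁‖ := mul_le_mul_of_nonneg_left hz (by linarith)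
  rw [hrep]
  constructor
  · have := norm_sub_norm_le (t • z₁) (-((1 - t) • z₂))
    rw [sub_neg_eq_add, norm_neg, h₁, h₂] at this
    nlinarith [norm_nonneg z₁]
  · have := norm_add_le (t • z₁) ((1 - t) • z₂)
    rw [h₁, h₂] at this
    linarith

section Line

variable {E : Type*} [NormedAddCommGroup E] [InnerProductSpace ℝ E] {A : E → E}

lemma hasDerivAt_inner_apply_line (z w : E) {t : ℝ} (hd : DifferentiableAt ℝ A (z + t • w)) :
    HasDerivAt (fun s : ℝ => ⟪A (z + s • w), w⟫) ⟪fderiv ℝ A (z + t • w) w, w⟫ t := by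
  have hline : HasDerivAt (fun s : ℝ => z + s • w) w t := by
    simpa using ((hasDerivAt_id t).smul_const w).const_add z
  simpa using (hd.hasFDerivAt.comp_hasDerivAt t hline).inner ℝ (hasDerivAt_const t w)

lemma mul_sub_le_inner_apply_line_sub (hA : Continuous A)
    (hd : ∀ z ≠ 0, DifferentiableAt ℝ A z) {z w : E} {u v K : ℝ} (huv : u ≤ v)
    (hK : ∀ t ∈ Set.Ioo u v, z + t • w ≠ 0 ∧ K ≤ ⟪fderiv ℝ A (z + t • w) w, w⟫) :
    K * (v - u) ≤ ⟪A (z + v • w), w⟫ - ⟪A (z + u • w), w⟫ := by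
  have hderiv : ∀ t ∈ Set.Ioo u v,
      HasDerivAt (fun s : ℝ => ⟪A (z + s • w), w⟫) ⟪fderiv ℝ A (z + t • w) w, w⟫ t :=
    fun t ht => hasDerivAt_inner_apply_line z w (hd _ (hK t ht).1)
  have hcont : Continuous fun s : ℝ => ⟪A (z + s • w), w⟫ := by fun_prop
  refine (convex_Icc u v).mul_sub_le_image_sub_of_le_deriv hcont.continuousOn ?_ ?_
    u (Set.left_mem_Icc.2 huv) v (Set.right_mem_Icc.2 huv) huv
  · rw [interior_Icc]
    exact fun t ht => (hderiv t ht).differentiableAt.differentiableWithinAt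
  · rw [interior_Icc]
    exact fun t ht => (hderiv t ht).deriv ▸ (hK t ht).2

lemma inner_apply_line_le_of_fderiv_nonneg (hA : Continuous A)
    (hd : ∀ z ≠ 0, DifferentiableAt ℝ A z) {z w : E} (hw : w ≠ 0)
    (hpos : ∀ x ≠ 0, 0 ≤ ⟪fderiv ℝ A x w, w⟫) {u v : ℝ} (huv : u ≤ v) :
    ⟪A (z + u • w), w⟫ ≤ ⟪A (z + v • w), w⟫ := by
  have hmono : ∀ a b : ℝ, a ≤ b → (∀ t ∈ Set.Ioo a b, z + t • w ≠ 0) →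
      ⟪A (z + a • w), w⟫ ≤ ⟪A (z + b • w), w⟫ := fun a b hab h0 => by
    have := mul_sub_le_inner_apply_line_sub hA hd (K := 0) hab
      fun t ht => ⟨h0 t ht, hpos _ (h0 t ht)⟩
    linarith
  by_cases hzero : ∃ t₀ ∈ Set.Ioo u v, z + t₀ • w = 0
  · -- the line passes through the origin at most once
    obtain ⟨t₀, ht₀, hz₀⟩ := hzero
    have huniq : ∀ t, z + t • w = 0 → t = t₀ := fun t ht =>
      smul_left_injective ℝ hw (add_left_cancel (ht.trans hz₀.symm))
    exact (hmono u t₀ ht₀.1.le fun t ht h => ht.2.ne (huniq t h)).trans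
      (hmono t₀ v ht₀.2.le fun t ht h => ht.1.ne' (huniq t h))
  · push Not at hzero
    exact hmono u v huv hzero

lemma div_four_le_inner_sub (hA : Continuous A) (hd : ∀ z ≠ 0, DifferentiableAt ℝ A z)
    {z₁ z₂ : E} (hz₁ : z₁ ≠ 0) (hz : ‖z₂‖ ≤ ‖z₁‖)
    (hpos : ∀ z ≠ 0, 0 ≤ ⟪fderiv ℝ A z (z₁ - z₂), z₁ - z₂⟫) {K : ℝ}
    (hK : ∀ z ≠ 0, ‖z₁‖ ≤ 2 * ‖z‖ → ‖z‖ ≤ ‖z₁‖ → K ≤ ⟪fderiv ℝ A z (z₁ - z₂), z₁ - z₂⟫) :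
    K / 4 ≤ ⟪A z₁ - A z₂, z₁ - z₂⟫ := by
  rcases eq_or_ne z₁ z₂ with rfl | hw
  · have := hK z₁ hz₁ (by linarith [norm_nonneg z₁]) le_rfl
    simp only [sub_self, map_zero, inner_zero_left] at this ⊢
    linarith
  have hline : ∀ t ∈ Set.Ioo (3 / 4 : ℝ) 1, z₂ + t • (z₁ - z₂) ≠ 0 ∧
      K ≤ ⟪fderiv ℝ A (z₂ + t • (z₁ - z₂)) (z₁ - z₂), z₁ - z₂⟫ := by
    intro t ht
    obtain ⟨hlow, hup⟩ := norm_add_smul_sub_bounds hz ht.1.le ht.2.le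
    have hne : z₂ + t • (z₁ - z₂) ≠ 0 := by
      rw [← norm_pos_iff]; linarith [norm_pos_iff.2 hz₁]
    exact ⟨hne, hK _ hne hlow hup⟩
  have hlast := mul_sub_le_inner_apply_line_sub hA hd (by norm_num) hline
  have hfirst := inner_apply_line_le_of_fderiv_nonneg hA hd (z := z₂) (sub_ne_zero.2 hw) hpos
    (show (0 : ℝ) ≤ 3 / 4 by norm_num)
  rw [one_smul, add_sub_cancel] at hlast
  rw [zero_smul, add_zero] at hfirst
  rw [inner_sub_left]
  linarith

end Line

section VField

variable {E : Type*} [NormedAddCommGroup E] [NormedSpace ℝ E]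

noncomputable def V (t : ℝ) (z : E) : E := ‖z‖ ^ ((t - 2) / 2) • z

lemma norm_V_sub_V_le {t : ℝ} (ht : 0 ≤ t) :
    ∃ C, 0 < C ∧ ∀ a b : E, ‖b‖ ≤ ‖a‖ →
      ‖V t a - V t b‖ ≤ C * ‖a‖ ^ ((t - 2) / 2) * ‖a - b‖ := by
  obtain ⟨C, hC, hscalar⟩ := abs_rpow_sub_rpow_mul_le (γ := (t - 2) / 2) (by linarith)
  refine ⟨1 + C, by positivity, fun a b hba => ?_⟩
  set γ := (t - 2) / 2
  have haγ : 0 ≤ ‖a‖ ^ γ := Real.rpow_nonneg (norm_nonneg a) γ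
  have hsplit : V t a - V t b = ‖a‖ ^ γ • (a - b) + (‖a‖ ^ γ - ‖b‖ ^ γ) • b := by
    simp only [V, smul_sub, sub_smul]; abel
  calc ‖V t a - V t b‖ ≤ ‖a‖ ^ γ * ‖a - b‖ + |‖a‖ ^ γ - ‖b‖ ^ γ| * ‖b‖ := by
        rw [hsplit]
        refine (norm_add_le _ _).trans_eq ?_
        rw [norm_smul, norm_smul, Real.norm_of_nonneg haγ, Real.norm_eq_abs]
    _ ≤ ‖a‖ ^ γ * ‖a - b‖ + C * ‖a‖ ^ γ * (‖a‖ - ‖b‖) := by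
        linarith [hscalar _ _ (norm_nonneg b) hba]
    _ ≤ ‖a‖ ^ γ * ‖a - b‖ + C * ‖a‖ ^ γ * ‖a - b‖ := by
        gcongr; exact norm_sub_norm_le a b
    _ = (1 + C) * ‖a‖ ^ γ * ‖a - b‖ := by ring

lemma norm_V_sub_V_sq_le {t : ℝ} (ht : 0 ≤ t) :
    ∃ C, 0 < C ∧ ∀ a b z : E, ‖b‖ ≤ ‖a‖ → ‖a‖ ≤ 2 * ‖z‖ → ‖z‖ ≤ ‖a‖ →
      ‖V t a - V t b‖ ^ 2 ≤ C * ‖z‖ ^ (t - 2) * ‖a - b‖ ^ 2 := by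
  obtain ⟨C, hC, hV⟩ := norm_V_sub_V_le (E := E) ht
  refine ⟨C ^ 2 * 2 ^ |t - 2|, by positivity, fun a b z hba haz hza => ?_⟩
  rcases eq_or_ne a 0 with rfl | ha
  · obtain rfl : b = 0 := norm_le_zero_iff.1 (by simpa using hba)
    simp [V]
  have hsq : (‖a‖ ^ ((t - 2) / 2)) ^ 2 = ‖a‖ ^ (t - 2) := by
    rw [← Real.rpow_natCast, ← Real.rpow_mul (norm_nonneg a)]; norm_num
  calc ‖V t a - V t b‖ ^ 2 ≤ (C * ‖a‖ ^ ((t - 2) / 2) * ‖a - b‖) ^ 2 := by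
        gcongr; exact hV a b hba
    _ = C ^ 2 * ‖a‖ ^ (t - 2) * ‖a - b‖ ^ 2 := by rw [mul_pow, mul_pow, hsq]
    _ ≤ C ^ 2 * (2 ^ |t - 2| * ‖z‖ ^ (t - 2)) * ‖a - b‖ ^ 2 := by
        gcongr
        exact rpow_le_two_rpow_abs_mul_rpow _ (by linarith [norm_pos_iff.2 ha]) haz (by linarith)
    _ = C ^ 2 * 2 ^ |t - 2| * ‖z‖ ^ (t - 2) * ‖a - b‖ ^ 2 := by ring

lemma norm_V_sub_V_sq_add_le {p q : ℝ} (hp : 0 ≤ p) (hq : 0 ≤ q) :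
    ∃ C, 0 < C ∧ ∀ a₀, 0 ≤ a₀ → ∀ a b z : E, ‖b‖ ≤ ‖a‖ → ‖a‖ ≤ 2 * ‖z‖ → ‖z‖ ≤ ‖a‖ →
      ‖V p a - V p b‖ ^ 2 + a₀ * ‖V q a - V q b‖ ^ 2 ≤
        C * (‖z‖ ^ (p - 2) + a₀ * ‖z‖ ^ (q - 2)) * ‖a - b‖ ^ 2 := by
  obtain ⟨Cp, hCp, hVp⟩ := norm_V_sub_V_sq_le (E := E) hp
  obtain ⟨Cq, -, hVq⟩ := norm_V_sub_V_sq_le (E := E) hq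
  refine ⟨max Cp Cq, lt_max_of_lt_left hCp, fun a₀ ha₀ a b z hba haz hza => ?_⟩
  have hz₀ : ∀ e : ℝ, 0 ≤ ‖z‖ ^ e := fun e => Real.rpow_nonneg (norm_nonneg z) e
  calc ‖V p a - V p b‖ ^ 2 + a₀ * ‖V q a - V q b‖ ^ 2
      ≤ Cp * ‖z‖ ^ (p - 2) * ‖a - b‖ ^ 2 + a₀ * (Cq * ‖z‖ ^ (q - 2) * ‖a - b‖ ^ 2) := by
        gcongr
        exacts [hVp a b z hba haz hza, hVq a b z hba haz hza]
    _ ≤ max Cp Cq * ‖z‖ ^ (p - 2) * ‖a - b‖ ^ 2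
          + a₀ * (max Cp Cq * ‖z‖ ^ (q - 2) * ‖a - b‖ ^ 2) := by
        have := hz₀ (p - 2); have := hz₀ (q - 2)
        gcongr
        exacts [le_max_left _ _, le_max_right _ _]
    _ = max Cp Cq * (‖z‖ ^ (p - 2) + a₀ * ‖z‖ ^ (q - 2)) * ‖a - b‖ ^ 2 := by ring

end VField

theorem stmt_12 {N : ℕ} (p q ν : ℝ) (hp : 1 < p) (hpq : p ≤ q) (hν : 0 < ν) :
    ∃ c : ℝ, 0 < c ∧ ∀ a₀ : ℝ, 0 ≤ a₀ →
      ∀ A₀ : EuclideanSpace ℝ (Fin N) → EuclideanSpace ℝ (Fin N),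
        Continuous A₀ →
        (∀ z : EuclideanSpace ℝ (Fin N), z ≠ 0 → DifferentiableAt ℝ A₀ z) →
        (∀ z : EuclideanSpace ℝ (Fin N), z ≠ 0 → ∀ ξ : EuclideanSpace ℝ (Fin N),
          ν * (‖z‖ ^ (p - 2) + a₀ * ‖z‖ ^ (q - 2)) * ‖ξ‖ ^ 2 ≤ ⟪fderiv ℝ A₀ z ξ, ξ⟫) →
        ∀ z₁ z₂ : EuclideanSpace ℝ (Fin N),
          ‖(‖z₁‖ ^ ((p - 2) / 2)) • z₁ - (‖z₂‖ ^ ((p - 2) / 2)) • z₂‖ ^ 2 +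
              a₀ * ‖(‖z₁‖ ^ ((q - 2) / 2)) • z₁ - (‖z₂‖ ^ ((q - 2) / 2)) • z₂‖ ^ 2 ≤
            c * ⟪A₀ z₁ - A₀ z₂, z₁ - z₂⟫ := by
  obtain ⟨C, hC, hV⟩ := norm_V_sub_V_sq_add_le (E := EuclideanSpace ℝ (Fin N))
    (p := p) (q := q) (by linarith) (by linarith)
  refine ⟨4 * C / ν, by positivity, fun a₀ ha₀ A₀ hA hd hell z₁ z₂ => ?_⟩
  change ‖V p z₁ - V p z₂‖ ^ 2 + a₀ * ‖V q z₁ - V q z₂‖ ^ 2 ≤ _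
  wlog hz : ‖z₂‖ ≤ ‖z₁‖ generalizing z₁ z₂
  · have := this z₂ z₁ (le_of_not_ge hz)
    rwa [norm_sub_rev (V p z₂), norm_sub_rev (V q z₂), ← neg_sub z₁, ← neg_sub (A₀ z₁),
      inner_neg_neg] at this
  rcases eq_or_ne z₁ 0 with rfl | hz₁
  · obtain rfl : z₂ = 0 := norm_le_zero_iff.1 (by simpa using hz)
    simp
  set L := ‖V p z₁ - V p z₂‖ ^ 2 + a₀ * ‖V q z₁ - V q z₂‖ ^ 2
  have hweight : ∀ z : EuclideanSpace ℝ (Fin N), 0 ≤ ν * (‖z‖ ^ (p - 2) + a₀ * ‖z‖ ^ (q - 2)) :=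
    fun z => by positivity
  have key := div_four_le_inner_sub hA hd hz₁ hz
    (fun z hz0 => (mul_nonneg (hweight z) (sq_nonneg _)).trans (hell z hz0 _))
    (K := ν / C * L) fun z hz0 hlow hup => calc
      ν / C * L ≤ ν / C * (C * (‖z‖ ^ (p - 2) + a₀ * ‖z‖ ^ (q - 2)) * ‖z₁ - z₂‖ ^ 2) := by
        gcongr; exact hV a₀ ha₀ z₁ z₂ z hz hlow hup
      _ = ν * (‖z‖ ^ (p - 2) + a₀ * ‖z‖ ^ (q - 2)) * ‖z₁ - z₂‖ ^ 2 := by field_simp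
      _ ≤ _ := hell z hz0 _
  calc L = 4 * C / ν * (ν / C * L / 4) := by field_simp
    _ ≤ 4 * C / ν * ⟪A₀ z₁ - A₀ z₂, z₁ - z₂⟫ := by gcongr
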